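/- Let m ≥ 1 and let c : ℕ^m → ℂ satisfy ∑_{j ∈ ℕ^m} |c(j)|² < ∞. Suppose c = ∑_{ℓ=1}^L a_1^{(ℓ)} ⊙ ⋯ ⊙ a_m^{(ℓ)} for some L < ∞ and some sequences a_i^{(ℓ)} : ℕ → ℂ. Then there exist L' < ∞ and sequences c_i^{(ℓ)} ∈ ℓ²(ℕ), 1 ≤ i ≤ m, 1 ≤ ℓ ≤ L', such that c = ∑_{ℓ=1}^{L'} c_1^{(ℓ)} ⊙ ⋯ ⊙ c_m^{(ℓ)}. -/

import Mathlib

/-!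
Induct on `m`. The slices `n ↦ c (n, j')` of `c` are `ℓ²` and lie in the finite-dimensional span
of the first factors of a representation, and finitely many points `s ∈ S` separate that span, so
it carries an interpolation formula `f = ∑ₛ f(s) uₛ` with `ℓ²` functions `uₛ`. This gives
`c (n, j') = ∑ₛ uₛ(n) c (s, j')`, where each `c (s, ·)` is again an `ℓ²` function of finite rank in
one variable fewer. Finally `c` is symmetric, so symmetrizing an elementary-tensor representation
of `c` with `ℓ²` factors yields the required symmetric one.
-/

open scoped BigOperators

/-- The symmetric tensor product `a_1 ⊙ ⋯ ⊙ a_m` of `m` sequences, evaluated at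
`j ∈ ℕ^m`: `(1/m!) ∑_σ a_{σ(1)}(j_1) ⋯ a_{σ(m)}(j_m)`. -/
noncomputable def symTensor (m : ℕ) (a : Fin m → ℕ+ → ℂ) (j : Fin m → ℕ+) : ℂ :=
  (m.factorial : ℂ)⁻¹ * ∑ σ : Equiv.Perm (Fin m), ∏ i, a (σ i) (j i)

open Submodule Set
open scoped ENNReal Nat

theorem Memℓp.comp_injective {α β E : Type*} [NormedAddCommGroup E] {p : ℝ≥0∞} {f : α → E}
    (hf : Memℓp f p) {g : β → α} (hg : Function.Injective g) : Memℓp (f ∘ g) p := by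
  rcases p.trichotomy with rfl | rfl | hp
  · exact memℓp_zero ((memℓp_zero_iff.mp hf).preimage hg.injOn)
  · exact memℓp_infty ((memℓp_infty_iff.mp hf).mono (range_comp_subset_range g fun a => ‖f a‖))
  · exact (memℓp_gen_iff hp).mpr (((memℓp_gen_iff hp).mp hf).comp_injective hg)

theorem memℓp_two_iff_summable_sq {α E : Type*} [NormedAddCommGroup E] {f : α → E} :
    Memℓp f 2 ↔ Summable fun i => ‖f i‖ ^ 2 := by
  simpa [Real.rpow_two] using memℓp_gen_iff (p := 2) (f := f) (by norm_num)

theorem Memℓp.of_mem_span {α 𝕜 : Type*} [NormedField 𝕜] {p : ℝ≥0∞} {s : Set (α → 𝕜)}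
    (hs : ∀ f ∈ s, Memℓp f p) {f : α → 𝕜} (hf : f ∈ span 𝕜 s) : Memℓp f p :=
  span_induction hs zero_memℓp (fun _ _ _ _ => Memℓp.add) (fun a _ _ h => h.const_smul a) hf

section Interpolation

variable {α 𝕜 : Type*} [Field 𝕜]

theorem Submodule.exists_finset_eq_zero_of_forall_mem_eq_zero (U : Submodule 𝕜 (α → 𝕜))
    [FiniteDimensional 𝕜 U] : ∃ S : Finset α, ∀ f ∈ U, (∀ s ∈ S, f s = 0) → f = 0 := by
  classical
  let K : Finset α → Submodule 𝕜 U := fun S =>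
    ⨅ s ∈ S, LinearMap.ker (LinearMap.proj s ∘ₗ U.subtype)
  have hK : ∀ S (f : U), f ∈ K S ↔ ∀ s ∈ S, (f : α → 𝕜) s = 0 := by
    intro S f; simp [K, Submodule.mem_iInf]
  obtain ⟨_, ⟨S, rfl⟩, hS⟩ :=
    (wellFounded_lt (α := Submodule 𝕜 U)).has_min (range K) ⟨_, ∅, rfl⟩
  refine ⟨S, fun f hfU hfS => by_contra fun hf => ?_⟩
  obtain ⟨x, hx⟩ := Function.ne_iff.mp hf
  refine hS _ ⟨insert x S, rfl⟩ (SetLike.lt_iff_le_and_exists.mpr ⟨fun g hg => ?_, ⟨f, hfU⟩, ?_⟩)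
  · exact (hK _ _).mpr fun s hs => (hK _ _).mp hg s (Finset.mem_insert_of_mem hs)
  · simp only [hK, Finset.forall_mem_insert, not_and]
    exact ⟨hfS, fun h _ => hx h⟩

theorem Submodule.exists_eq_sum_smul_eval (U : Submodule 𝕜 (α → 𝕜)) [FiniteDimensional 𝕜 U] :
    ∃ (S : Finset α) (u : S → α → 𝕜), (∀ s, u s ∈ U) ∧ ∀ f ∈ U, f = ∑ s : S, f s • u s := by
  classical
  obtain ⟨S, hS⟩ := U.exists_finset_eq_zero_of_forall_mem_eq_zero
  let restrict : U →ₗ[𝕜] S → 𝕜 :=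
    (LinearMap.pi fun s : S => LinearMap.proj (s : α)) ∘ₗ U.subtype
  have hres : ∀ f : U, restrict f = fun s : S => (f : α → 𝕜) s := fun f => rfl
  have hker : LinearMap.ker restrict = ⊥ := by
    refine eq_bot_iff.mpr fun f hf => ?_
    rw [LinearMap.mem_ker, hres] at hf
    exact (Submodule.mem_bot 𝕜).mpr (Subtype.ext (hS f f.2 fun s hs => congrFun hf ⟨s, hs⟩))
  obtain ⟨extend, hextend⟩ := restrict.exists_leftInverse_of_injective hker
  refine ⟨S, fun s => extend (Pi.single s 1), fun s => (extend _).2, fun f hf => ?_⟩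
  have := congrArg Subtype.val (LinearMap.congr_fun hextend ⟨f, hf⟩)
  rw [LinearMap.comp_apply, pi_eq_sum_univ' (restrict ⟨f, hf⟩), map_sum] at this
  simpa [hres] using this.symm

end Interpolation

def elemTensor {α 𝕜 : Type*} [CommMonoid 𝕜] {m : ℕ} (a : Fin m → α → 𝕜) (j : Fin m → α) : 𝕜 :=
  ∏ i, a i (j i)

section ElemTensor

variable {α 𝕜 : Type*} {m : ℕ}

theorem elemTensor_cons_apply [CommMonoid 𝕜] (a : Fin (m + 1) → α → 𝕜) (n : α) (j : Fin m → α) :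
    elemTensor a (Fin.cons n j) = a 0 n * elemTensor (Fin.tail a) j :=
  Fin.prod_univ_succ _

theorem elemTensor_comp_perm [CommMonoid 𝕜] (a : Fin m → α → 𝕜) (σ : Equiv.Perm (Fin m))
    (j : Fin m → α) : elemTensor a (j ∘ σ) = elemTensor (a ∘ σ.symm) j := by
  simp only [elemTensor, Function.comp_apply]
  rw [← Equiv.prod_comp σ fun i => a (σ.symm i) (j i)]
  simp

theorem elemTensor_update_smul [CommSemiring 𝕜] (a : Fin m → α → 𝕜) (i₀ : Fin m) (w : 𝕜) :
    elemTensor (Function.update a i₀ (w • a i₀)) = w • elemTensor a := by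
  ext j
  simp only [elemTensor, Pi.smul_apply, smul_eq_mul]
  rw [← Finset.mul_prod_erase _ _ (Finset.mem_univ i₀),
    ← Finset.mul_prod_erase _ _ (Finset.mem_univ i₀),
    Finset.prod_congr rfl fun i hi => by rw [Function.update_of_ne (Finset.ne_of_mem_erase hi)]]
  simp [mul_assoc]

variable [Field 𝕜]

theorem finiteDimensional_span_slices {c : (Fin (m + 1) → α) → 𝕜}
    (hc : c ∈ span 𝕜 (range elemTensor)) :
    FiniteDimensional 𝕜 (span 𝕜 (range fun j n => c (Fin.cons n j))) := by
  classical
  obtain ⟨T, hT, hcT⟩ := mem_span_finite_of_mem_span hc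
  obtain ⟨A, -, rfl⟩ := Finset.subset_set_image_iff.mp (image_univ ▸ hT)
  refine Submodule.finiteDimensional_of_le (S₂ := span 𝕜 (A.image fun a => a 0 : Set (α → 𝕜)))
    (span_le.mpr ?_)
  rintro _ ⟨j, rfl⟩
  refine span_le.mpr ?_
    (apply_mem_span_image_of_mem_span (LinearMap.funLeft 𝕜 𝕜 (Fin.cons · j)) hcT)
  rintro _ ⟨_, hT, rfl⟩
  obtain ⟨a, ha, rfl⟩ := Finset.mem_image.mp hT
  have : LinearMap.funLeft 𝕜 𝕜 (Fin.cons · j) (elemTensor a) =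
      elemTensor (Fin.tail a) j • a 0 := by
    ext n; simp [LinearMap.funLeft_apply, elemTensor_cons_apply, mul_comm]
  rw [this]
  exact smul_mem _ _ (subset_span (Finset.mem_image_of_mem _ ha))

theorem cons_mem_span_elemTensor {c : (Fin (m + 1) → α) → 𝕜}
    (hc : c ∈ span 𝕜 (range elemTensor)) (n : α) :
    (fun j => c (Fin.cons n j)) ∈ span 𝕜 (range elemTensor) := by
  refine span_le.mpr ?_ (apply_mem_span_image_of_mem_span (LinearMap.funLeft 𝕜 𝕜 (Fin.cons n)) hc)
  rintro _ ⟨_, ⟨a, rfl⟩, rfl⟩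
  have : LinearMap.funLeft 𝕜 𝕜 (Fin.cons n) (elemTensor a) = a 0 n • elemTensor (Fin.tail a) := by
    ext j; simp [LinearMap.funLeft_apply, elemTensor_cons_apply]
  rw [this]
  exact smul_mem _ _ (subset_span ⟨_, rfl⟩)

end ElemTensor

section Memℓp

variable {α 𝕜 : Type*} [NormedField 𝕜] {p : ℝ≥0∞} {m : ℕ}

theorem mul_tail_mem_span_elemTensor {u : α → 𝕜} (hu : Memℓp u p) {g : (Fin m → α) → 𝕜}
    (hg : g ∈ span 𝕜 (elemTensor '' {a | ∀ i, Memℓp (a i) p})) :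
    (fun j : Fin (m + 1) → α => u (j 0) * g (Fin.tail j)) ∈
      span 𝕜 (elemTensor '' {a | ∀ i, Memℓp (a i) p}) := by
  let T := LinearMap.mulLeft 𝕜 (fun j : Fin (m + 1) → α => u (j 0)) ∘ₗ
    LinearMap.funLeft 𝕜 𝕜 Fin.tail
  refine span_le.mpr ?_ (apply_mem_span_image_of_mem_span T hg)
  rintro _ ⟨_, ⟨a, ha, rfl⟩, rfl⟩
  refine subset_span ⟨Fin.cons u a, Fin.forall_fin_succ.mpr ⟨hu, ha⟩, ?_⟩
  ext j
  simp [T, elemTensor, Fin.prod_univ_succ, LinearMap.funLeft_apply, Fin.tail]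

theorem mem_span_elemTensor_memℓp {c : (Fin m → α) → 𝕜} (hc : Memℓp c p)
    (hspan : c ∈ span 𝕜 (range elemTensor)) :
    c ∈ span 𝕜 (elemTensor '' {a | ∀ i, Memℓp (a i) p}) := by
  induction m with
  | zero => simpa using hspan
  | succ m ih =>
    have hslice (j : Fin m → α) : Memℓp (fun n => c (Fin.cons n j)) p :=
      hc.comp_injective (Fin.cons_left_injective (α := fun _ => α) j)
    have := finiteDimensional_span_slices hspan
    obtain ⟨S, u, huU, hu⟩ := (span 𝕜 (range fun j n => c (Fin.cons n j))).exists_eq_sum_smul_eval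
    have hc_eq : c = ∑ s : S, fun j => u s (j 0) * c (Fin.cons s (Fin.tail j)) := by
      ext j
      have := congrFun (hu _ (subset_span ⟨Fin.tail j, rfl⟩)) (j 0)
      simpa [Finset.sum_apply, mul_comm] using this
    rw [hc_eq]
    refine sum_mem fun s _ => mul_tail_mem_span_elemTensor (g := fun j => c (Fin.cons s j)) ?_ ?_
    · exact Memℓp.of_mem_span (by rintro _ ⟨j, rfl⟩; exact hslice j) (huU s)
    · exact ih (hc.comp_injective (Fin.cons_right_injective (α := fun _ => α) _))
        (cons_mem_span_elemTensor hspan s)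

theorem exists_eq_sum_elemTensor_of_mem_span (i₀ : Fin m) {c : (Fin m → α) → 𝕜}
    (hc : c ∈ span 𝕜 (elemTensor '' {a | ∀ i, Memℓp (a i) p})) :
    ∃ (n : ℕ) (b : Fin n → Fin m → α → 𝕜), (∀ k i, Memℓp (b k i) p) ∧
      c = ∑ k, elemTensor (b k) := by
  classical
  obtain ⟨n, w, g, rfl⟩ := mem_span_set'.mp hc
  choose a ha hag using fun k => (g k).2
  refine ⟨n, fun k => Function.update (a k) i₀ (w k • a k i₀), fun k i => ?_, ?_⟩
  · rcases eq_or_ne i i₀ with rfl | hi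
    · simpa using (ha k i).const_smul (w k)
    · simpa [hi] using ha k i
  · simp_rw [elemTensor_update_smul, hag]

end Memℓp

section Symmetrize

variable {α 𝕜 : Type*} [Field 𝕜] {m : ℕ}

def symmetrize : ((Fin m → α) → 𝕜) →ₗ[𝕜] (Fin m → α) → 𝕜 :=
  (m ! : 𝕜)⁻¹ • ∑ σ : Equiv.Perm (Fin m), LinearMap.funLeft 𝕜 𝕜 (fun j => j ∘ σ)

theorem symmetrize_apply (f : (Fin m → α) → 𝕜) (j : Fin m → α) :
    symmetrize f j = (m ! : 𝕜)⁻¹ * ∑ σ : Equiv.Perm (Fin m), f (j ∘ σ) := by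
  simp [symmetrize, Finset.sum_apply, LinearMap.funLeft_apply]

theorem symmetrize_comp_perm (f : (Fin m → α) → 𝕜) (σ : Equiv.Perm (Fin m)) (j : Fin m → α) :
    symmetrize f (j ∘ σ) = symmetrize f j := by
  simp only [symmetrize_apply]
  congr 1
  exact Equiv.sum_comp (Equiv.mulLeft σ) (fun τ => f (j ∘ τ))

theorem symmetrize_eq_self [CharZero 𝕜] {f : (Fin m → α) → 𝕜}
    (hf : ∀ (σ : Equiv.Perm (Fin m)) j, f (j ∘ σ) = f j) : symmetrize f = f := by
  ext j
  simp [symmetrize_apply, hf, Fintype.card_perm, Nat.factorial_ne_zero]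

end Symmetrize

theorem symmetrize_elemTensor {m : ℕ} (a : Fin m → ℕ+ → ℂ) :
    symmetrize (elemTensor a) = symTensor m a := by
  ext j
  rw [symmetrize_apply, symTensor]
  simp_rw [elemTensor_comp_perm]
  congr 1
  exact Equiv.sum_comp (Equiv.inv (Equiv.Perm (Fin m))) (fun σ => ∏ i, a (σ i) (j i))

theorem symTensor_comp_perm {m : ℕ} (a : Fin m → ℕ+ → ℂ) (σ : Equiv.Perm (Fin m))
    (j : Fin m → ℕ+) : symTensor m a (j ∘ σ) = symTensor m a j := by
  rw [← symmetrize_elemTensor, symmetrize_comp_perm]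

theorem symTensor_mem_span_elemTensor {m : ℕ} (a : Fin m → ℕ+ → ℂ) :
    symTensor m a ∈ span ℂ (range elemTensor) := by
  have : symTensor m a = (m ! : ℂ)⁻¹ • ∑ σ : Equiv.Perm (Fin m), elemTensor (a ∘ σ) := by
    ext j; simp [symTensor, elemTensor, Finset.sum_apply]
  rw [this]
  exact smul_mem _ _ (sum_mem fun σ _ => subset_span ⟨_, rfl⟩)

theorem stmt13 (m : ℕ) (hm : 1 ≤ m) (c : (Fin m → ℕ+) → ℂ)
    (hc2 : Summable fun j : Fin m → ℕ+ => ‖c j‖ ^ 2)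
    (L : ℕ) (a : Fin L → Fin m → ℕ+ → ℂ)
    (hrep : ∀ j : Fin m → ℕ+, c j = ∑ ℓ, symTensor m (a ℓ) j) :
    ∃ (L' : ℕ) (b : Fin L' → Fin m → ℕ+ → ℂ),
      (∀ ℓ i, Summable fun n : ℕ+ => ‖b ℓ i n‖ ^ 2) ∧
      ∀ j : Fin m → ℕ+, c j = ∑ ℓ, symTensor m (b ℓ) j := by
  have hc : c = ∑ ℓ, symTensor m (a ℓ) := funext fun j => by simp [hrep]
  have hsymm : symmetrize c = c :=
    symmetrize_eq_self fun σ j => by simp_rw [hrep, symTensor_comp_perm]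
  have hspan : c ∈ span ℂ (range elemTensor) :=
    hc ▸ sum_mem fun ℓ _ => symTensor_mem_span_elemTensor (a ℓ)
  obtain ⟨L', b, hb, hcb⟩ := exists_eq_sum_elemTensor_of_mem_span ⟨0, hm⟩
    (mem_span_elemTensor_memℓp (memℓp_two_iff_summable_sq.mpr hc2) hspan)
  refine ⟨L', b, fun ℓ i => memℓp_two_iff_summable_sq.mp (hb ℓ i), fun j => ?_⟩
  rw [← hsymm, hcb, map_sum, Finset.sum_apply]
  simp_rw [symmetrize_elemTensor]
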